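/- arXiv:1603.03317 — 3 statements merged into one kernel-verified Lean document; each statement's English description precedes it below -/
import Mathlib

section
/- Let v : (0,1]² → (0,1] take values in {2^{-k} : k ∈ ℕ} and satisfy d(v(p), v(q)) ≤ (1/2) d(p,q) for all p,q ∈ (0,1]², where d denotes the dyadic metric on both domain and target. Let I×J ⊆ (0,1]² be a dyadic rectangle and let x ∈ I. If there exists y ∈ J with |J|/|I| ≤ v(x,y), then |J|/|I| ≤ v(x,y′) for every y′ ∈ J. -/
/-- The dyadic interval `(m 2^{-n}, (m+1) 2^{-n}] ⊆ (0,1]` (for `m < 2^n`). -/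
def dyadicI (n m : ℕ) : Set ℝ := Set.Ioc ((m : ℝ) / 2 ^ n) (((m : ℝ) + 1) / 2 ^ n)

/-- The dyadic distance of two points of `(0,1]`: the length of the smallest dyadic
interval containing both. -/
noncomputable def dyadDist (x y : ℝ) : ℝ :=
  sInf {l : ℝ | ∃ n m : ℕ, m < 2 ^ n ∧ x ∈ dyadicI n m ∧ y ∈ dyadicI n m ∧ l = ((2 : ℝ) ^ n)⁻¹}

/-- The dyadic distance of two points of `(0,1]²`: the side length of the smallest dyadic
square containing both. -/
noncomputable def dyadDist2 (p q : ℝ × ℝ) : ℝ :=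
  sInf {l : ℝ | ∃ n m m' : ℕ, m < 2 ^ n ∧ m' < 2 ^ n ∧
    p.1 ∈ dyadicI n m ∧ q.1 ∈ dyadicI n m ∧ p.2 ∈ dyadicI n m' ∧ q.2 ∈ dyadicI n m' ∧
    l = ((2 : ℝ) ^ n)⁻¹}

/-- The unit square `(0,1]²`. -/
def unitSq : Set (ℝ × ℝ) := Set.Ioc (0 : ℝ) 1 ×ˢ Set.Ioc (0 : ℝ) 1

/-!
If `v(x,y') < |J|/|I| ≤ v(x,y) = 2^{-k}`, then `v(x,y') = 2^{-k'}` with `k' > k`. A dyadic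
interval containing `2^{-k}` and `2^{-k'}` is longer than their gap `≥ 2^{-k-1}`, hence has length
`≥ 2^{-k}`, so `d(v(x,y), v(x,y')) ≥ 2^{-k} ≥ |J|`. But `(x,y)` and `(x,y')` lie in a common dyadic
square of side `|J|`, so the Lipschitz bound gives `d(v(x,y), v(x,y')) ≤ |J|/2`.
-/

lemma mem_Ioc_of_mem_dyadicI {n m : ℕ} (hm : m < 2 ^ n) {x : ℝ} (hx : x ∈ dyadicI n m) :
    x ∈ Set.Ioc (0 : ℝ) 1 := by
  obtain ⟨hlo, hhi⟩ := hx
  have hm' : (m : ℝ) + 1 ≤ 2 ^ n := by exact_mod_cast hm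
  exact ⟨(by positivity : (0 : ℝ) ≤ m / 2 ^ n).trans_lt hlo,
    hhi.trans ((div_le_one (by positivity)).mpr hm')⟩

lemma mem_dyadicI_zero_zero {x : ℝ} (hx : x ∈ Set.Ioc (0 : ℝ) 1) : x ∈ dyadicI 0 0 := by
  simpa [dyadicI] using hx

lemma exists_mem_dyadicI (n : ℕ) {x : ℝ} (hx : x ∈ Set.Ioc (0 : ℝ) 1) :
    ∃ m, m < 2 ^ n ∧ x ∈ dyadicI n m := by
  have hpos : (0 : ℝ) < 2 ^ n := by positivity
  have ht : 0 < x * 2 ^ n := mul_pos hx.1 hpos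
  have hceil : 1 ≤ ⌈x * 2 ^ n⌉₊ := Nat.one_le_ceil_iff.mpr ht
  have hcast : ((⌈x * 2 ^ n⌉₊ - 1 : ℕ) : ℝ) = ⌈x * 2 ^ n⌉₊ - 1 := by
    push_cast [hceil]; ring
  refine ⟨⌈x * 2 ^ n⌉₊ - 1, ?_, ?_, ?_⟩
  · have : ⌈x * 2 ^ n⌉₊ ≤ 2 ^ n := by
      rw [Nat.ceil_le]
      push_cast
      nlinarith [hx.2]
    omega
  · rw [hcast, div_lt_iff₀ hpos]
    linarith [Nat.ceil_lt_add_one ht.le]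
  · rw [hcast, sub_add_cancel, le_div_iff₀ hpos]
    exact Nat.le_ceil _

lemma sub_lt_of_mem_dyadicI {n m : ℕ} {a b : ℝ} (ha : a ∈ dyadicI n m) (hb : b ∈ dyadicI n m) :
    a - b < ((2 : ℝ) ^ n)⁻¹ := by
  have h : ((m : ℝ) + 1) / 2 ^ n = m / 2 ^ n + ((2 : ℝ) ^ n)⁻¹ := by ring
  linarith [ha.2, hb.1]

lemma le_of_inv_two_pow_mem_dyadicI {k k' n m : ℕ} (hkk' : k < k')
    (hk : ((2 : ℝ) ^ k)⁻¹ ∈ dyadicI n m) (hk' : ((2 : ℝ) ^ k')⁻¹ ∈ dyadicI n m) : n ≤ k := by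
  have hhalf : ((2 : ℝ) ^ k')⁻¹ ≤ ((2 : ℝ) ^ (k + 1))⁻¹ :=
    inv_anti₀ (by positivity) (pow_le_pow_right₀ one_le_two hkk')
  have hgap : ((2 : ℝ) ^ (k + 1))⁻¹ < ((2 : ℝ) ^ n)⁻¹ := by
    have h : ((2 : ℝ) ^ (k + 1))⁻¹ = ((2 : ℝ) ^ k)⁻¹ - ((2 : ℝ) ^ (k + 1))⁻¹ := by
      rw [pow_succ]; ring
    linarith [sub_lt_of_mem_dyadicI hk hk']
  have := (pow_lt_pow_iff_right₀ one_lt_two).mp ((inv_lt_inv₀ (by positivity) (by positivity)).mp hgap)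
  omega

lemma inv_two_pow_le_dyadDist {k k' : ℕ} (hkk' : k < k') :
    ((2 : ℝ) ^ k)⁻¹ ≤ dyadDist ((2 : ℝ) ^ k)⁻¹ ((2 : ℝ) ^ k')⁻¹ := by
  have hIoc (j : ℕ) : ((2 : ℝ) ^ j)⁻¹ ∈ Set.Ioc (0 : ℝ) 1 :=
    ⟨by positivity, inv_le_one_of_one_le₀ (one_le_pow₀ one_le_two)⟩
  refine le_csInf ⟨1, 0, 0, one_pos, mem_dyadicI_zero_zero (hIoc k),
    mem_dyadicI_zero_zero (hIoc k'), by norm_num⟩ ?_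
  rintro l ⟨n, m, -, hk, hk', rfl⟩
  exact inv_anti₀ (by positivity) (pow_le_pow_right₀ one_le_two
    (le_of_inv_two_pow_mem_dyadicI hkk' hk hk'))

lemma dyadDist2_le {p q : ℝ × ℝ} {n m m' : ℕ} (hm : m < 2 ^ n) (hm' : m' < 2 ^ n)
    (hp₁ : p.1 ∈ dyadicI n m) (hq₁ : q.1 ∈ dyadicI n m)
    (hp₂ : p.2 ∈ dyadicI n m') (hq₂ : q.2 ∈ dyadicI n m') :
    dyadDist2 p q ≤ ((2 : ℝ) ^ n)⁻¹ := by
  refine csInf_le ⟨0, ?_⟩ ⟨n, m, m', hm, hm', hp₁, hq₁, hp₂, hq₂, rfl⟩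
  rintro l ⟨n, -, -, -, -, -, -, -, -, rfl⟩
  positivity

/-- Lemma 2.1: let `v : (0,1]² → (0,1]` take values in `{2^{-k} : k ∈ ℕ}` and be Lipschitz
with constant `1/2` for the dyadic metrics. Let `I×J` be a dyadic rectangle of the unit
square (with `I` indexed by `(nI, mI)` and `J` by `(nJ, mJ)`) and let `x ∈ I`. If
`|J|/|I| ≤ v(x,y)` for some `y ∈ J`, then `|J|/|I| ≤ v(x,y')` for every `y' ∈ J`. -/
theorem stmt_3 (v : ℝ × ℝ → ℝ)
    (hval : ∀ q ∈ unitSq, ∃ k : ℕ, v q = (2 : ℝ) ^ (-(k : ℤ)))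
    (hLip : ∀ q ∈ unitSq, ∀ q' ∈ unitSq, dyadDist (v q) (v q') ≤ (1 / 2) * dyadDist2 q q')
    (nI mI nJ mJ : ℕ) (hmI : mI < 2 ^ nI) (hmJ : mJ < 2 ^ nJ)
    (x : ℝ) (hx : x ∈ dyadicI nI mI)
    (y : ℝ) (hy : y ∈ dyadicI nJ mJ)
    (hvy : ((2 : ℝ) ^ nJ)⁻¹ / ((2 : ℝ) ^ nI)⁻¹ ≤ v (x, y)) :
    ∀ y' ∈ dyadicI nJ mJ, ((2 : ℝ) ^ nJ)⁻¹ / ((2 : ℝ) ^ nI)⁻¹ ≤ v (x, y') := by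
  intro y' hy'
  by_contra! hlt
  have hxI := mem_Ioc_of_mem_dyadicI hmI hx
  have hxy : (x, y) ∈ unitSq := ⟨hxI, mem_Ioc_of_mem_dyadicI hmJ hy⟩
  have hxy' : (x, y') ∈ unitSq := ⟨hxI, mem_Ioc_of_mem_dyadicI hmJ hy'⟩
  obtain ⟨k, hk⟩ := hval _ hxy
  obtain ⟨k', hk'⟩ := hval _ hxy'
  rw [zpow_neg, zpow_natCast] at hk hk'
  have hkk' : k < k' := (pow_lt_pow_iff_right₀ one_lt_two).mp <|
    (inv_lt_inv₀ (by positivity) (by positivity)).mp (hk' ▸ hk ▸ hlt.trans_le hvy)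
  have hJ_le_ratio : ((2 : ℝ) ^ nJ)⁻¹ ≤ ((2 : ℝ) ^ nJ)⁻¹ / ((2 : ℝ) ^ nI)⁻¹ :=
    le_div_self (by positivity) (by positivity) (inv_le_one_of_one_le₀ (one_le_pow₀ one_le_two))
  obtain ⟨m, hm, hxm⟩ := exists_mem_dyadicI nJ hxI
  have := calc ((2 : ℝ) ^ nJ)⁻¹
      ≤ ((2 : ℝ) ^ k)⁻¹ := hk ▸ hJ_le_ratio.trans hvy
    _ ≤ dyadDist (v (x, y)) (v (x, y')) := by rw [hk, hk']; exact inv_two_pow_le_dyadDist hkk'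
    _ ≤ 1 / 2 * dyadDist2 (x, y) (x, y') := hLip _ hxy _ hxy'
    _ ≤ 1 / 2 * ((2 : ℝ) ^ nJ)⁻¹ := by gcongr; exact dyadDist2_le hm hmJ hxm hxm hy hy'
  linarith [(by positivity : (0 : ℝ) < ((2 : ℝ) ^ nJ)⁻¹)]
end

section
/- Let φ be a real, even Schwartz function on ℝ with ∫_ℝ φ(u) du = 0. Then there exists a Schwartz function Φ on ℝ such that for every x ≠ 0, Φ(x) = ∫_0^1 t φ(t x) (dt/t) = (1/x) ∫_0^x φ(u) du. -/
/-!
Write `Φ(x) = ∫₀¹ φ(tx) dt`. Differentiating under the integral sign gives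
`Φ⁽ⁿ⁾(x) = ∫₀¹ tⁿ φ⁽ⁿ⁾(tx) dt`, so `Φ` is smooth. For decay, integrating
`d/dt (tⁿ⁺¹ φ⁽ⁿ⁾(tx))` over `[0, 1]` gives `x Φ⁽ⁿ⁺¹⁾(x) = φ⁽ⁿ⁾(x) - (n + 1) Φ⁽ⁿ⁾(x)`, which
transfers polynomial decay from `Φ⁽ⁿ⁾` to `Φ⁽ⁿ⁺¹⁾` with one more power of `x`. The remaining case
is `x Φ(x) = ∫₀ˣ φ`: as `φ` is even with vanishing integral, `∫₀^∞ φ = 0`, so `∫₀ˣ φ = -∫ₓ^∞ φ`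
is bounded by `|x|⁻ᵏ ∫ |u|ᵏ |φ(u)| du` for every `k`.
-/

open MeasureTheory intervalIntegral Set SchwartzMap
open scoped ContDiff

variable {F : Type*} [NormedAddCommGroup F] [NormedSpace ℝ F]

noncomputable def dilationAverage (n : ℕ) (f : ℝ → F) (x : ℝ) : F :=
  ∫ t in (0 : ℝ)..1, t ^ n • f (t * x)

theorem hasDerivAt_dilationAverage (ψ : 𝓢(ℝ, F)) (n : ℕ) (x₀ : ℝ) :
    HasDerivAt (dilationAverage n ψ) (dilationAverage (n + 1) (derivCLM ℝ F ψ) x₀) x₀ := by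
  have hcont : ∀ (m : ℕ) (f : 𝓢(ℝ, F)) (x : ℝ), Continuous fun t : ℝ => t ^ m • f (t * x) := by
    fun_prop
  refine (hasDerivAt_integral_of_dominated_loc_of_deriv_le
    (F := fun x t => t ^ n • ψ (t * x)) (F' := fun x t => t ^ (n + 1) • derivCLM ℝ F ψ (t * x))
    (bound := fun _ => SchwartzMap.seminorm ℝ 0 0 (derivCLM ℝ F ψ)) Filter.univ_mem
    (.of_forall fun x => (hcont n ψ x).aestronglyMeasurable) ((hcont n ψ x₀).intervalIntegrable 0 1)
    (hcont (n + 1) (derivCLM ℝ F ψ) x₀).aestronglyMeasurable ?_ intervalIntegrable_const ?_).2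
  · refine .of_forall fun t ht x _ => ?_
    rw [uIoc_of_le zero_le_one] at ht
    rw [norm_smul, norm_pow, Real.norm_of_nonneg ht.1.le]
    exact (mul_le_of_le_one_left (norm_nonneg _) (pow_le_one₀ ht.1.le ht.2)).trans
      (norm_le_seminorm ℝ _ _)
  · exact .of_forall fun t _ x _ =>
      (((ψ.hasDerivAt (t * x)).scomp x ((hasDerivAt_id x).const_mul t)).const_smul
        (t ^ n)).congr_deriv (by simp [smul_smul, pow_succ])

theorem differentiable_dilationAverage (ψ : 𝓢(ℝ, F)) (n : ℕ) :
    Differentiable ℝ (dilationAverage n ψ) :=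
  fun x => (hasDerivAt_dilationAverage ψ n x).differentiableAt

theorem deriv_dilationAverage (ψ : 𝓢(ℝ, F)) (n : ℕ) :
    deriv (dilationAverage n ψ) = dilationAverage (n + 1) (derivCLM ℝ F ψ) :=
  funext fun x => (hasDerivAt_dilationAverage ψ n x).deriv

theorem iteratedDeriv_dilationAverage (k n : ℕ) (ψ : 𝓢(ℝ, F)) :
    iteratedDeriv k (dilationAverage n ψ) = dilationAverage (n + k) ((derivCLM ℝ F)^[k] ψ) := by
  induction k generalizing n ψ with
  | zero => simp
  | succ k ih =>
    rw [iteratedDeriv_succ', deriv_dilationAverage, ih, Function.iterate_succ_apply,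
      add_right_comm, add_assoc]

theorem contDiff_dilationAverage (ψ : 𝓢(ℝ, F)) (n : ℕ) :
    ContDiff ℝ ∞ (dilationAverage n ψ) :=
  contDiff_of_differentiable_iteratedDeriv fun m _ => by
    rw [iteratedDeriv_dilationAverage]
    exact differentiable_dilationAverage _ _

theorem norm_dilationAverage_le {f : ℝ → F} {C : ℝ} (hf : ∀ y, ‖f y‖ ≤ C) (n : ℕ) (x : ℝ) :
    ‖dilationAverage n f x‖ ≤ C := by
  have hC : 0 ≤ C := (norm_nonneg _).trans (hf 0)
  have := norm_integral_le_of_norm_le_const (a := 0) (b := 1)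
    (f := fun t => t ^ n • f (t * x)) fun t ht => by
      rw [uIoc_of_le zero_le_one] at ht
      rw [norm_smul, norm_pow, Real.norm_of_nonneg ht.1.le]
      exact (mul_le_of_le_one_left (norm_nonneg _) (pow_le_one₀ ht.1.le ht.2)).trans (hf _)
  simpa [dilationAverage] using this

theorem smul_dilationAverage_zero (f : ℝ → F) (x : ℝ) :
    x • dilationAverage 0 f x = ∫ u in (0 : ℝ)..x, f u := by
  rcases eq_or_ne x 0 with rfl | hx
  · simp
  · simp [dilationAverage, integral_comp_mul_right f hx, smul_smul, hx]

theorem smul_dilationAverage_succ_derivCLM [CompleteSpace F] (ψ : 𝓢(ℝ, F)) (n : ℕ) (x : ℝ) :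
    x • dilationAverage (n + 1) (derivCLM ℝ F ψ) x =
      ψ x - ((n : ℝ) + 1) • dilationAverage n ψ x := by
  have hderiv : ∀ t : ℝ, HasDerivAt (fun t => t ^ (n + 1) • ψ (t * x))
      (((n : ℝ) + 1) • (t ^ n • ψ (t * x)) + x • (t ^ (n + 1) • derivCLM ℝ F ψ (t * x))) t :=
    fun t => ((hasDerivAt_pow (n + 1) t).smul
      ((ψ.hasDerivAt (t * x)).scomp t ((hasDerivAt_id t).mul_const x))).congr_deriv (by
        simp only [Function.comp_apply, id_eq, one_mul, Nat.cast_add, Nat.cast_one,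
          add_tsub_cancel_right, derivCLM_apply]
        module)
  have hintegrable : ∀ (m : ℕ) (f : 𝓢(ℝ, F)) (c : ℝ),
      IntervalIntegrable (fun t : ℝ => c • (t ^ m • f (t * x))) volume 0 1 :=
    fun m f c => Continuous.intervalIntegrable (by fun_prop) 0 1
  have hFTC := integral_eq_sub_of_hasDerivAt (fun t _ => hderiv t)
    ((hintegrable n ψ _).add (hintegrable (n + 1) (derivCLM ℝ F ψ) x))
  rw [integral_add (hintegrable n ψ _) (hintegrable (n + 1) (derivCLM ℝ F ψ) x),
    intervalIntegral.integral_smul, intervalIntegral.integral_smul] at hFTC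
  simp only [one_pow, one_mul, one_smul, ne_eq, add_eq_zero, one_ne_zero, and_false,
    not_false_eq_true, zero_pow, zero_smul, sub_zero] at hFTC
  rw [← hFTC]
  simp only [dilationAverage]
  abel

theorem integral_Ioi_zero_eq_zero_of_even {f : ℝ → F} (hf : Integrable f)
    (heven : ∀ x, f (-x) = f x) (hint : ∫ u, f u = 0) : ∫ u in Ioi 0, f u = 0 := by
  have hIic : ∫ u in Iic 0, f u = ∫ u in Ioi 0, f u := by
    simpa [heven] using (integral_comp_neg_Ioi 0 f).symm
  have h := integral_Iic_add_Ioi (b := 0) hf.integrableOn hf.integrableOn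
  rw [hint, hIic, ← two_smul ℝ] at h
  simpa using h

theorem integral_zero_neg_eq_neg_of_even {f : ℝ → F} (heven : ∀ x, f (-x) = f x) (x : ℝ) :
    ∫ u in (0 : ℝ)..-x, f u = -∫ u in (0 : ℝ)..x, f u := by
  have h := integral_comp_neg (a := 0) (b := x) f
  simp only [heven, neg_zero] at h
  rw [h, integral_symm]

theorem pow_mul_norm_integral_Ioi_le (ψ : 𝓢(ℝ, F)) (k : ℕ) {x : ℝ} (hx : 0 ≤ x) :
    x ^ k * ‖∫ u in Ioi x, ψ u‖ ≤ ∫ u, ‖u‖ ^ k * ‖ψ u‖ :=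
  calc x ^ k * ‖∫ u in Ioi x, ψ u‖ ≤ ∫ u in Ioi x, x ^ k * ‖ψ u‖ := by
        rw [MeasureTheory.integral_const_mul]
        gcongr
        exact norm_integral_le_integral_norm _
    _ ≤ ∫ u in Ioi x, ‖u‖ ^ k * ‖ψ u‖ :=
        setIntegral_mono_on (ψ.integrable.norm.const_mul _).integrableOn
          (ψ.integrable_pow_mul volume k).integrableOn measurableSet_Ioi fun u hu => by
            rw [Real.norm_of_nonneg (hx.trans (le_of_lt hu))]
            gcongr
            exact le_of_lt hu
    _ ≤ ∫ u, ‖u‖ ^ k * ‖ψ u‖ :=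
        setIntegral_le_integral (ψ.integrable_pow_mul volume k) (.of_forall fun _ => by positivity)

theorem abs_pow_mul_norm_primitive_le [CompleteSpace F] (φ : 𝓢(ℝ, F))
    (heven : ∀ x, φ (-x) = φ x) (hint : ∫ u, φ u = 0) (k : ℕ) (x : ℝ) :
    |x| ^ k * ‖∫ u in (0 : ℝ)..x, φ u‖ ≤ ∫ u, ‖u‖ ^ k * ‖φ u‖ := by
  have habs : ‖∫ u in (0 : ℝ)..x, φ u‖ = ‖∫ u in (0 : ℝ)..|x|, φ u‖ := by
    rcases abs_choice x with h | h <;> rw [h]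
    rw [integral_zero_neg_eq_neg_of_even heven, norm_neg]
  have h0 := integral_Ioi_zero_eq_zero_of_even φ.integrable heven hint
  rw [habs, ← integral_Ioi_sub_Ioi' φ.integrable.integrableOn φ.integrable.integrableOn, h0,
    zero_sub, norm_neg]
  exact pow_mul_norm_integral_Ioi_le φ k (abs_nonneg x)

theorem abs_pow_succ_mul_norm (x : ℝ) (v : F) (k : ℕ) :
    |x| ^ (k + 1) * ‖v‖ = |x| ^ k * ‖x • v‖ := by
  rw [norm_smul, Real.norm_eq_abs]
  ring

theorem abs_pow_succ_mul_norm_dilationAverage_succ_le [CompleteSpace F] (ψ : 𝓢(ℝ, F))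
    {n k : ℕ} {C : ℝ} (hC : ∀ x, |x| ^ k * ‖dilationAverage n ψ x‖ ≤ C) (x : ℝ) :
    |x| ^ (k + 1) * ‖dilationAverage (n + 1) (derivCLM ℝ F ψ) x‖ ≤
      SchwartzMap.seminorm ℝ k 0 ψ + ((n : ℝ) + 1) * C :=
  calc |x| ^ (k + 1) * ‖dilationAverage (n + 1) (derivCLM ℝ F ψ) x‖
      = |x| ^ k * ‖ψ x - ((n : ℝ) + 1) • dilationAverage n ψ x‖ := by
        rw [abs_pow_succ_mul_norm, smul_dilationAverage_succ_derivCLM]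
    _ ≤ |x| ^ k * ‖ψ x‖ + ((n : ℝ) + 1) * (|x| ^ k * ‖dilationAverage n ψ x‖) := by
        rw [mul_left_comm, ← mul_add]
        gcongr
        refine (norm_sub_le _ _).trans_eq ?_
        rw [norm_smul, Real.norm_of_nonneg (by positivity)]
    _ ≤ SchwartzMap.seminorm ℝ k 0 ψ + ((n : ℝ) + 1) * C := by
        gcongr
        · simpa [Real.norm_eq_abs] using norm_pow_mul_le_seminorm ℝ ψ k x
        · exact hC x

theorem exists_bound_dilationAverage_iterate_derivCLM [CompleteSpace F] (φ : 𝓢(ℝ, F))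
    (heven : ∀ x, φ (-x) = φ x) (hint : ∫ u, φ u = 0) (k n : ℕ) :
    ∃ C, ∀ x, |x| ^ k * ‖dilationAverage n ((derivCLM ℝ F)^[n] φ) x‖ ≤ C := by
  induction k generalizing n with
  | zero =>
    exact ⟨_, fun x => by
      simpa using norm_dilationAverage_le (fun y => norm_le_seminorm ℝ _ y) n x⟩
  | succ k ih =>
    cases n with
    | zero =>
      refine ⟨∫ u, ‖u‖ ^ k * ‖φ u‖, fun x => ?_⟩
      rw [Function.iterate_zero_apply, abs_pow_succ_mul_norm, smul_dilationAverage_zero]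
      exact abs_pow_mul_norm_primitive_le φ heven hint k x
    | succ n =>
      obtain ⟨C, hC⟩ := ih n
      exact ⟨_, fun x => by
        rw [Function.iterate_succ_apply']
        exact abs_pow_succ_mul_norm_dilationAverage_succ_le _ hC x⟩

/-- For a real, even Schwartz function `φ` with `∫ φ = 0`, the telescoping integral
`∫_0^1 φ_t(x) dt/t = ∫_0^1 t φ(tx) dt/t` coincides for `x ≠ 0` with a Schwartz function,
and equals `(1/x) ∫_0^x φ(u) du`. -/
theorem stmt_11 (φ : SchwartzMap ℝ ℝ)
    (heven : ∀ x : ℝ, φ (-x) = φ x)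
    (hint : ∫ u : ℝ, φ u = 0) :
    ∃ Φ : SchwartzMap ℝ ℝ, ∀ x : ℝ, x ≠ 0 →
      Φ x = ∫ t in (0 : ℝ)..1, (t * φ (t * x)) / t ∧
      Φ x = (1 / x) * ∫ u in (0 : ℝ)..x, φ u := by
  have hdecay (k n : ℕ) :
      ∃ C, ∀ x : ℝ, ‖x‖ ^ k * ‖iteratedFDeriv ℝ n (dilationAverage 0 φ) x‖ ≤ C := by
    obtain ⟨C, hC⟩ := exists_bound_dilationAverage_iterate_derivCLM φ heven hint k n
    refine ⟨C, fun x => ?_⟩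
    rw [norm_iteratedFDeriv_eq_norm_iteratedDeriv, iteratedDeriv_dilationAverage, zero_add,
      Real.norm_eq_abs]
    exact hC x
  refine ⟨⟨dilationAverage 0 φ, contDiff_dilationAverage φ 0, hdecay⟩, fun x hx => ⟨?_, ?_⟩⟩
  · refine integral_congr_ae (.of_forall fun t ht => ?_)
    rw [uIoc_of_le zero_le_one] at ht
    simp [mul_div_cancel_left₀ _ ht.1.ne']
  · rw [← smul_dilationAverage_zero, smul_eq_mul, one_div, inv_mul_cancel_left₀ hx]
    rfl
end

section
/- Let u₁, u₂ > 0 satisfy |log₂ u₁ − log₂ u₂| < 1/4. Define v_i = 2^{⌊log₂ u_i⌋} and w_i = 2^{⌊1/2 + log₂ u_i⌋} for i = 1, 2, where ⌊·⌋ is the integer floor. If v₁ > v₂, then v₁ = 2 v₂ and w₁ = w₂ = v₁. -/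
/-!
Write `x = log₂ u₁`, `y = log₂ u₂`. Since `⌊y⌋ < ⌊x⌋`, the integer `n = ⌊x⌋` lies in `(y, x]`,
an interval of length `< 1/4`; hence `x, y` are both within `1/4` of `n`. Then `⌊y⌋ = n - 1`,
and both `1/2 + x` and `1/2 + y` lie in `[n, n + 1)`, so they round down to `n`.
-/

section FloorRing

variable {α : Type*} [Field α] [LinearOrder α] [IsStrictOrderedRing α] [FloorRing α]

theorem abs_sub_floor_lt_of_floor_lt {x y ε : α} (hfl : ⌊y⌋ < ⌊x⌋) (hxy : |x - y| < ε) :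
    |x - ⌊x⌋| < ε ∧ |y - ⌊x⌋| < ε := by
  have hy : y < ⌊x⌋ := Int.floor_lt.mp hfl
  have hx : (⌊x⌋ : α) ≤ x := Int.floor_le x
  have hxy' : x - y < ε := (le_abs_self _).trans_lt hxy
  constructor <;> rw [abs_lt] <;> constructor <;> linarith

theorem floor_eq_floor_sub_one_of_floor_lt {x y : α} (hfl : ⌊y⌋ < ⌊x⌋) (hxy : x - y < 1) :
    ⌊y⌋ = ⌊x⌋ - 1 := by
  have hy : y < ⌊x⌋ := Int.floor_lt.mp hfl
  have hx : (⌊x⌋ : α) ≤ x := Int.floor_le x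
  rw [Int.floor_eq_iff]
  push_cast
  constructor <;> linarith

theorem floor_half_add_eq_of_abs_sub_lt {x : α} {n : ℤ} (h : |x - n| < 1 / 2) :
    ⌊1 / 2 + x⌋ = n := by
  obtain ⟨hlo, hhi⟩ := abs_lt.mp h
  rw [Int.floor_eq_iff]
  constructor <;> linarith

end FloorRing

theorem stmt_13_general (u₁ u₂ : ℝ)
    (hlog : |Real.logb 2 u₁ - Real.logb 2 u₂| < 1 / 4)
    (hv : (2 : ℝ) ^ (⌊Real.logb 2 u₁⌋) > (2 : ℝ) ^ (⌊Real.logb 2 u₂⌋)) :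
    (2 : ℝ) ^ (⌊Real.logb 2 u₁⌋) = 2 * (2 : ℝ) ^ (⌊Real.logb 2 u₂⌋) ∧
    (2 : ℝ) ^ (⌊1 / 2 + Real.logb 2 u₁⌋) = (2 : ℝ) ^ (⌊1 / 2 + Real.logb 2 u₂⌋) ∧
    (2 : ℝ) ^ (⌊1 / 2 + Real.logb 2 u₁⌋) = (2 : ℝ) ^ (⌊Real.logb 2 u₁⌋) := by
  set x := Real.logb 2 u₁
  set y := Real.logb 2 u₂
  have hfl : ⌊y⌋ < ⌊x⌋ := (zpow_lt_zpow_iff_right₀ one_lt_two).mp hv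
  obtain ⟨hx, hy⟩ := abs_sub_floor_lt_of_floor_lt hfl hlog
  have hw₁ : ⌊1 / 2 + x⌋ = ⌊x⌋ := floor_half_add_eq_of_abs_sub_lt (hx.trans (by norm_num))
  have hw₂ : ⌊1 / 2 + y⌋ = ⌊x⌋ := floor_half_add_eq_of_abs_sub_lt (hy.trans (by norm_num))
  have hv₂ : ⌊y⌋ = ⌊x⌋ - 1 :=
    floor_eq_floor_sub_one_of_floor_lt hfl (((le_abs_self _).trans_lt hlog).trans (by norm_num))
  refine ⟨?_, by rw [hw₁, hw₂], by rw [hw₁]⟩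
  rw [hv₂, zpow_sub_one₀ two_ne_zero]
  ring

/-- Let `u₁, u₂ > 0` with `|log₂ u₁ - log₂ u₂| < 1/4`, and set `vᵢ = 2^⌊log₂ uᵢ⌋`,
`wᵢ = 2^⌊1/2 + log₂ uᵢ⌋`. If `v₁ > v₂`, then `v₁ = 2 v₂` and `w₁ = w₂ = v₁`. -/
theorem stmt_13 (u₁ u₂ : ℝ) (h₁ : 0 < u₁) (h₂ : 0 < u₂)
    (hlog : |Real.logb 2 u₁ - Real.logb 2 u₂| < 1 / 4)
    (hv : (2 : ℝ) ^ (⌊Real.logb 2 u₁⌋) > (2 : ℝ) ^ (⌊Real.logb 2 u₂⌋)) :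
    (2 : ℝ) ^ (⌊Real.logb 2 u₁⌋) = 2 * (2 : ℝ) ^ (⌊Real.logb 2 u₂⌋) ∧
    (2 : ℝ) ^ (⌊1 / 2 + Real.logb 2 u₁⌋) = (2 : ℝ) ^ (⌊1 / 2 + Real.logb 2 u₂⌋) ∧
    (2 : ℝ) ^ (⌊1 / 2 + Real.logb 2 u₁⌋) = (2 : ℝ) ^ (⌊Real.logb 2 u₁⌋) :=
  stmt_13_general u₁ u₂ hlog hv
end
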